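/- Let N be a sufficiently large positive integer, X the unique real solution of X log X = N, and τ = X^{−23/25}. Let S(α) = Σ_{p ≤ X} e(α[p log p]) log p (sum over primes p ≤ X). Then for all real α with |α| ≤ τ, S(α) = Σ_{n ≤ X} Λ(n) e(α n log n) + O(X^{1/2}). -/

import Mathlib

/-!
Replacing `⌊p log p⌋` by `p log p` moves the phase by at most `|α|`, and `e` is `2π`-Lipschitz, so the
prime terms change by at most `2π |α| θ(X) ≪ X^{-23/25} · X ≤ X^{1/2}` (Chebyshev's `θ(X) ≤ X log 4`).
The remaining terms of the von Mangoldt sum are the prime powers `p^k ≤ X` with `k ≥ 2`; they are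
bounded in absolute value by `ψ(X) - θ(X) = O(√X)`.
-/

/-- `e(t) = e^{2πit}`. -/
noncomputable def ee (t : ℝ) : ℂ := Complex.exp (2 * Real.pi * Complex.I * t)

/-- `S(α) = Σ_{p ≤ X} e(α⌊p log p⌋) log p`, the sum running over primes `p ≤ X`. -/
noncomputable def S (X : ℝ) (α : ℝ) : ℂ :=
  ∑ p ∈ (Finset.range (⌊X⌋₊ + 1)).filter Nat.Prime,
    (Real.log p : ℂ) * ee (α * (⌊(p : ℝ) * Real.log p⌋ : ℝ))

/-- The exponential sum `Σ_{n ≤ X} Λ(n) e(α n log n)` over positive integers `n ≤ X`. -/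
noncomputable def T (X : ℝ) (α : ℝ) : ℂ :=
  ∑ n ∈ Finset.Icc 1 ⌊X⌋₊,
    ((ArithmeticFunction.vonMangoldt n : ℝ) : ℂ) * ee (α * ((n : ℝ) * Real.log n))

open Real Finset Nat Chebyshev ArithmeticFunction

lemma ee_eq_exp_I_mul (t : ℝ) : ee t = Complex.exp (Complex.I * ↑(2 * π * t)) := by
  rw [ee]; push_cast; ring_nf

lemma norm_ee (t : ℝ) : ‖ee t‖ = 1 := by
  rw [ee_eq_exp_I_mul, Complex.norm_exp_I_mul_ofReal]

lemma ee_add (a b : ℝ) : ee (a + b) = ee a * ee b := by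
  simp only [ee_eq_exp_I_mul, ← Complex.exp_add]; push_cast; ring_nf

lemma norm_ee_sub_ee_le (a b : ℝ) : ‖ee a - ee b‖ ≤ 2 * π * |a - b| := by
  have h : ee a - ee b = ee b * (ee (a - b) - 1) := by
    rw [mul_sub, ← ee_add, add_sub_cancel, mul_one]
  rw [h, norm_mul, norm_ee, one_mul, ee_eq_exp_I_mul]
  refine norm_exp_I_mul_ofReal_sub_one_le.trans_eq ?_
  rw [Real.norm_eq_abs, abs_mul, abs_of_pos (by positivity)]

lemma norm_S_sub_sum_primes_le (X α : ℝ) :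
    ‖S X α - ∑ p ∈ primesLE ⌊X⌋₊, (Real.log p : ℂ) * ee (α * (p * Real.log p))‖
      ≤ 2 * π * |α| * θ X := by
  rw [S, ← primesLE_eq_filter_range, ← sum_sub_distrib, theta_eq_sum_primesLE, mul_sum]
  refine (norm_sum_le _ _).trans (sum_le_sum fun p hp => ?_)
  have hlog : 0 ≤ Real.log p := Real.log_natCast_nonneg p
  rw [← mul_sub, norm_mul, Complex.norm_real, Real.norm_eq_abs, abs_of_nonneg hlog]
  calc Real.log p * ‖ee (α * ⌊(p : ℝ) * Real.log p⌋) - ee (α * (p * Real.log p))‖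
      ≤ Real.log p * (2 * π * |α|) := by
        gcongr
        refine (norm_ee_sub_ee_le _ _).trans (mul_le_mul_of_nonneg_left ?_ (by positivity))
        rw [← mul_sub, abs_mul, abs_sub_comm, Int.self_sub_floor, abs_of_nonneg (Int.fract_nonneg ((p : ℝ) * Real.log p))]
        exact mul_le_of_le_one_right (abs_nonneg α) (Int.fract_lt_one _).le
    _ = 2 * π * |α| * Real.log p := mul_comm _ _

lemma norm_sum_not_prime_vonMangoldt_mul_le (X : ℝ) (f : ℕ → ℝ) :
    ‖∑ n ∈ Icc 1 ⌊X⌋₊ with ¬n.Prime, (Λ n : ℂ) * ee (f n)‖ ≤ ψ X - θ X := by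
  rw [psi_sub_theta_eq_sum_not_prime, ← Icc_add_one_left_eq_Ioc, zero_add]
  refine (norm_sum_le _ _).trans_eq (sum_congr rfl fun n _ => ?_)
  rw [norm_mul, norm_ee, mul_one, Complex.norm_real, Real.norm_eq_abs,
    abs_of_nonneg vonMangoldt_nonneg]

lemma T_eq_sum_primes_add_sum_not_prime (X α : ℝ) :
    T X α = ∑ p ∈ primesLE ⌊X⌋₊, (Real.log p : ℂ) * ee (α * (p * Real.log p))
      + ∑ n ∈ Icc 1 ⌊X⌋₊ with ¬n.Prime, (Λ n : ℂ) * ee (α * (n * Real.log n)) := by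
  rw [T, ← sum_filter_add_sum_filter_not _ Nat.Prime, primesLE_eq_filter_Icc_one]
  congr 1
  exact sum_congr rfl fun p hp => by rw [vonMangoldt_apply_prime (mem_filter.1 hp).2]

lemma norm_S_sub_T_le (X α : ℝ) :
    ‖S X α - T X α‖ ≤ 2 * π * |α| * θ X + (ψ X - θ X) := by
  rw [T_eq_sum_primes_add_sum_not_prime, ← sub_sub]
  exact (norm_sub_le _ _).trans
    (add_le_add (norm_S_sub_sum_primes_le X α) (norm_sum_not_prime_vonMangoldt_mul_le X _))

lemma rpow_mul_self_le_rpow {X a b : ℝ} (hX : 1 ≤ X) (hab : a + 1 ≤ b) :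
    X ^ a * X ≤ X ^ b := by
  rw [← rpow_add_one (by positivity)]
  exact rpow_le_rpow_of_exponent_le hX hab

theorem S_eq_vonMangoldt_sum :
    ∃ C : ℝ, 0 < C ∧ ∃ N₀ : ℕ, ∀ N : ℕ, N₀ ≤ N →
      ∀ X : ℝ, 1 < X → X * Real.log X = N →
        ∀ α : ℝ, |α| ≤ X ^ ((-23 : ℝ)/25) →
          ‖S X α - T X α‖ ≤ C * X ^ ((1 : ℝ)/2) := by
  obtain ⟨C₀, hC₀⟩ := psi_sub_theta_le_mul_sqrt
  have hlog4 : 0 < Real.log 4 := Real.log_pos (by norm_num)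
  refine ⟨2 * π * Real.log 4 + |C₀|, by positivity, 0, fun N _ X hX _ α hα => ?_⟩
  calc ‖S X α - T X α‖ ≤ 2 * π * |α| * θ X + (ψ X - θ X) := norm_S_sub_T_le X α
    _ ≤ 2 * π * X ^ ((-23 : ℝ) / 25) * (Real.log 4 * X) + |C₀| * X ^ ((1 : ℝ) / 2) := by
        gcongr
        · exact theta_le_log4_mul_x (by positivity)
        · rw [← sqrt_eq_rpow]; exact (hC₀ X).trans (by gcongr; exact le_abs_self C₀)
    _ = 2 * π * Real.log 4 * (X ^ ((-23 : ℝ) / 25) * X) + |C₀| * X ^ ((1 : ℝ) / 2) := by ring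
    _ ≤ 2 * π * Real.log 4 * X ^ ((1 : ℝ) / 2) + |C₀| * X ^ ((1 : ℝ) / 2) := by
        gcongr; exact rpow_mul_self_le_rpow hX.le (by norm_num)
    _ = (2 * π * Real.log 4 + |C₀|) * X ^ ((1 : ℝ) / 2) := by ring
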